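/- arXiv:2303.11452 — 5 statements merged into one kernel-verified Lean document; each statement's English description precedes it below -/
import Mathlib

section
/- Let 0 < μ ≤ 1/2 and assume there exists a set S ⊆ V with μ·Vol(G) ≤ Vol(S) ≤ (1−μ)·Vol(G). Then 2·φ_μ(G) ≥ λ_μ(G) ≥ (1/2)·max{ min{ ((μ/(1−μ))·φ_μ(G))², ((μ²·φ_μ(G) + (1−2μ)·φ_0(G))/(1−μ−μ²))² }, φ_0(G)² }. -/
/-!
Upper bound: for a set `S` attaining `φ_μ`, the normalized two-valued vector
`𝟙_S / Vol S - 𝟙_{Sᶜ} / Vol Sᶜ` satisfies the constraints defining `λ_μ`, and its Rayleigh quotient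
is `|∂S| · Vol G / (Vol S · Vol Sᶜ) ≤ 2 φ(S)`.

Lower bound: let `x` be admissible and `m = √(μ / ((1 - μ) Vol G))`. Since `Σ d x = 0` and
`m ≤ |x| ≤ (1 - μ) / μ · m`, the set `{x > 0}` is `μ`-balanced, and every edge leaving it carries
a jump of at least `2m`; hence `Q_L(x) ≥ 4 μ² φ_μ / (1 - μ) ≥ (μ φ_μ / (1 - μ))² / 2` because
`φ_μ ≤ 1`. Independently, the classical Cheeger argument gives `2 Q_L(x) ≥ φ_0²`: shift `x` by a
weighted median, split it into positive and negative parts, and bound the total variation of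
their squares from below by the discrete co-area inequality and from above by Cauchy–Schwarz.
-/

open Finset

lemma posPart_sq_add_negPart_sq (a : ℝ) : a⁺ ^ 2 + a⁻ ^ 2 = a ^ 2 := by
  rcases le_total 0 a with ha | ha
  · simp [posPart_eq_self.2 ha, negPart_eq_zero.2 ha]
  · simp [posPart_eq_zero.2 ha, negPart_eq_neg.2 ha]

lemma sq_posPart_sub_add_sq_negPart_sub_le (a b : ℝ) :
    (a⁺ - b⁺) ^ 2 + (a⁻ - b⁻) ^ 2 ≤ (a - b) ^ 2 := by
  rcases le_total 0 a with ha | ha <;> rcases le_total 0 b with hb | hb <;>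
    simp [*] <;> nlinarith

lemma add_div_mul_le_two_div_min {s t : ℝ} (hs : 0 < s) (ht : 0 < t) :
    (s + t) / (s * t) ≤ 2 / min s t := by
  rcases le_total s t with h | h
  · rw [min_eq_left h, div_le_div_iff₀ (by positivity) hs]
    nlinarith
  · rw [min_eq_right h, div_le_div_iff₀ (by positivity) ht]
    nlinarith

lemma div_sqrt_mul_mul_eq_sqrt {s t V : ℝ} (hs : 0 < s) (ht : 0 < t) (hV : 0 < V) :
    t / √(s * t * V) = √(t / (s * V)) := by
  rw [← Real.sqrt_sq (div_pos ht (Real.sqrt_pos.2 (by positivity))).le, div_pow,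
    Real.sq_sqrt (by positivity)]
  congr 1
  field_simp

lemma sqrt_div_mem_Icc {μ s t V : ℝ} (hμ : 0 < μ) (hμ1 : μ < 1) (hs : 0 < s) (hV : 0 < V)
    (h₁ : μ * s ≤ (1 - μ) * t) (h₂ : μ * t ≤ (1 - μ) * s) :
    √(t / (s * V)) ∈ Set.Icc (√(μ / ((1 - μ) * V))) (√((1 - μ) / (μ * V))) := by
  have h1μ : 0 < 1 - μ := by linarith
  refine ⟨Real.sqrt_le_sqrt ?_, Real.sqrt_le_sqrt ?_⟩ <;>
    rw [div_le_div_iff₀ (by positivity) (by positivity)]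
  · nlinarith [mul_le_mul_of_nonneg_right h₁ hV.le]
  · nlinarith [mul_le_mul_of_nonneg_right h₂ hV.le]

lemma mul_sqrt_div_eq {μ V : ℝ} (hμ : 0 < μ) (hμ1 : μ < 1) (hV : 0 < V) :
    μ * √((1 - μ) / (μ * V)) = (1 - μ) * √(μ / ((1 - μ) * V)) := by
  have h1μ : 0 < 1 - μ := by linarith
  rw [← Real.sqrt_sq (by positivity : 0 ≤ μ * √((1 - μ) / (μ * V))),
    ← Real.sqrt_sq (by positivity : 0 ≤ (1 - μ) * √(μ / ((1 - μ) * V))), mul_pow, mul_pow,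
    Real.sq_sqrt (by positivity), Real.sq_sqrt (by positivity)]
  congr 1
  field_simp

noncomputable section

namespace WeightedGraph

variable {V : Type*}

def vol (d : V → ℝ) (S : Finset V) : ℝ := ∑ v ∈ S, d v

variable {d : V → ℝ}

lemma vol_empty (d : V → ℝ) : vol d ∅ = 0 := sum_empty

lemma vol_nonneg (hd : ∀ v, 0 ≤ d v) (S : Finset V) : 0 ≤ vol d S :=
  sum_nonneg fun v _ => hd v

lemma vol_pos (hd : ∀ v, 0 < d v) {S : Finset V} (hS : S.Nonempty) : 0 < vol d S :=
  sum_pos (fun v _ => hd v) hS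

variable [Fintype V]

def dirichletEnergy (w : V → V → ℝ) (x : V → ℝ) : ℝ :=
  (1 / 2) * ∑ u, ∑ v, w u v * (x u - x v) ^ 2

def totalVariation (w : V → V → ℝ) (x : V → ℝ) : ℝ :=
  (1 / 2) * ∑ u, ∑ v, w u v * |x u - x v|

variable {w : V → V → ℝ}

lemma degree_nonneg (hw : ∀ u v, 0 ≤ w u v) (hd : ∀ v, d v = ∑ u, w v u) (v : V) : 0 ≤ d v :=
  hd v ▸ sum_nonneg fun u _ => hw v u

lemma dirichletEnergy_nonneg (hw : ∀ u v, 0 ≤ w u v) (x : V → ℝ) : 0 ≤ dirichletEnergy w x :=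
  mul_nonneg (by norm_num)
    (sum_nonneg fun u _ => sum_nonneg fun v _ => mul_nonneg (hw u v) (sq_nonneg _))

lemma totalVariation_add_of_monotone {g₁ g₂ : V → ℝ}
    (h : ∀ u v, g₁ u + g₂ u ≤ g₁ v + g₂ v → g₁ u ≤ g₁ v ∧ g₂ u ≤ g₂ v) :
    totalVariation w (g₁ + g₂) = totalVariation w g₁ + totalVariation w g₂ := by
  have habs : ∀ u v, |(g₁ + g₂) u - (g₁ + g₂) v| = |g₁ u - g₁ v| + |g₂ u - g₂ v| := by
    intro u v
    rw [Pi.add_apply, Pi.add_apply, add_sub_add_comm, abs_add_eq_add_abs_iff]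
    rcases le_total (g₁ u + g₂ u) (g₁ v + g₂ v) with huv | huv
    · exact Or.inr ⟨by linarith [h u v huv], by linarith [h u v huv]⟩
    · exact Or.inl ⟨by linarith [h v u huv], by linarith [h v u huv]⟩
  simp only [totalVariation, habs, mul_add, sum_add_distrib]

lemma sq_sum_sum_mul_le (hw : ∀ u v, 0 ≤ w u v) (f g : V → V → ℝ) :
    (∑ u, ∑ v, w u v * (f u v * g u v)) ^ 2
      ≤ (∑ u, ∑ v, w u v * f u v ^ 2) * ∑ u, ∑ v, w u v * g u v ^ 2 := by
  simp only [← sum_product' univ univ]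
  exact sum_sq_le_sum_mul_sum_of_sq_le_mul _ (fun p _ => mul_nonneg (hw _ _) (sq_nonneg _))
    (fun p _ => mul_nonneg (hw _ _) (sq_nonneg _)) fun p _ => le_of_eq (by ring)

lemma sum_sum_mul_left (hd : ∀ v, d v = ∑ u, w v u) (f : V → ℝ) :
    ∑ u, ∑ v, w u v * f u = ∑ u, d u * f u := by
  simp only [hd, sum_mul]

lemma sum_sum_mul_right (hsymm : ∀ u v, w u v = w v u) (hd : ∀ v, d v = ∑ u, w v u)
    (f : V → ℝ) : ∑ u, ∑ v, w u v * f v = ∑ v, d v * f v := by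
  rw [sum_comm]
  simp only [hd, sum_mul, hsymm]

lemma sum_sum_mul_add_sq_le (hsymm : ∀ u v, w u v = w v u) (hw : ∀ u v, 0 ≤ w u v)
    (hd : ∀ v, d v = ∑ u, w v u) (g : V → ℝ) :
    ∑ u, ∑ v, w u v * (g u + g v) ^ 2 ≤ 4 * ∑ v, d v * g v ^ 2 := by
  calc ∑ u, ∑ v, w u v * (g u + g v) ^ 2
      ≤ ∑ u, ∑ v, (2 * (w u v * g u ^ 2) + 2 * (w u v * g v ^ 2)) := by
        gcongr with u _ v _
        nlinarith [hw u v, mul_nonneg (hw u v) (sq_nonneg (g u - g v))]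
    _ = 4 * ∑ v, d v * g v ^ 2 := by
        simp only [sum_add_distrib, ← mul_sum, sum_sum_mul_left hd,
          sum_sum_mul_right hsymm hd]
        ring

lemma exists_weighted_median [Nonempty V] (hd : ∀ v, 0 ≤ d v) (x : V → ℝ) :
    ∃ c, vol d {v | c < x v} ≤ vol d univ / 2 ∧ vol d {v | x v < c} ≤ vol d univ / 2 := by
  set T := (univ.image x).filter fun t => vol d univ / 2 ≤ vol d {v | x v ≤ t}
  have hT : T.Nonempty := by
    obtain ⟨u, -, hu⟩ := exists_max_image univ x univ_nonempty
    refine ⟨x u, mem_filter.2 ⟨mem_image_of_mem x (mem_univ u), ?_⟩⟩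
    rw [filter_true_of_mem fun v _ => hu v (mem_univ v)]
    linarith [vol_nonneg hd univ]
  set c := T.min' hT
  refine ⟨c, ?_, ?_⟩
  · have hc : vol d univ / 2 ≤ vol d {v | x v ≤ c} := (mem_filter.1 (T.min'_mem hT)).2
    have hsplit : vol d {v | x v ≤ c} + vol d {v | c < x v} = vol d univ := by
      simpa only [vol, not_le] using sum_filter_add_sum_filter_not univ (fun v => x v ≤ c) d
    linarith
  · by_contra! hlt
    have hne : ({v | x v < c} : Finset V).Nonempty := by
      by_contra! hempty
      rw [hempty, vol_empty] at hlt
      linarith [vol_nonneg hd univ]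
    obtain ⟨u, hu, hmax⟩ := exists_max_image _ x hne
    have hsub : ({v | x v < c} : Finset V) ⊆ ({v | x v ≤ x u} : Finset V) := fun v hv =>
      mem_filter.2 ⟨mem_univ v, hmax v hv⟩
    have huT : x u ∈ T := mem_filter.2 ⟨mem_image_of_mem x (mem_univ u),
      hlt.le.trans (sum_le_sum_of_subset_of_nonneg hsub fun v _ _ => hd v)⟩
    exact (mem_filter.1 hu).2.not_ge (T.min'_le _ huT)

variable [DecidableEq V]

def cut (w : V → V → ℝ) (S : Finset V) : ℝ := ∑ u ∈ S, ∑ v ∈ Sᶜ, w u v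

def conductance (w : V → V → ℝ) (d : V → ℝ) (S : Finset V) : ℝ :=
  cut w S / min (vol d S) (vol d Sᶜ)

lemma vol_add_vol_compl (d : V → ℝ) (S : Finset V) : vol d S + vol d Sᶜ = vol d univ :=
  sum_add_sum_compl S d

lemma sum_mul_ite_mem (S : Finset V) (a b : ℝ) :
    ∑ v, d v * (if v ∈ S then a else b) = a * vol d S + b * vol d Sᶜ := by
  rw [← sum_add_sum_compl S, vol, vol, mul_sum, mul_sum]
  congr 1 <;> refine sum_congr rfl fun v hv => ?_
  · rw [if_pos hv, mul_comm]
  · rw [if_neg (mem_compl.1 hv), mul_comm]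

lemma cut_nonneg (hw : ∀ u v, 0 ≤ w u v) (S : Finset V) : 0 ≤ cut w S :=
  sum_nonneg fun u _ => sum_nonneg fun v _ => hw u v

lemma cut_compl (hsymm : ∀ u v, w u v = w v u) (S : Finset V) : cut w Sᶜ = cut w S := by
  rw [cut, cut, compl_compl, sum_comm]
  simp_rw [hsymm]

lemma cut_le_vol (hw : ∀ u v, 0 ≤ w u v) (hd : ∀ v, d v = ∑ u, w v u) (S : Finset V) :
    cut w S ≤ vol d S :=
  sum_le_sum fun u _ => (hd u).symm ▸
    sum_le_sum_of_subset_of_nonneg (subset_univ _) fun v _ _ => hw u v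

lemma conductance_nonneg (hw : ∀ u v, 0 ≤ w u v) (hd : ∀ v, 0 ≤ d v) (S : Finset V) :
    0 ≤ conductance w d S :=
  div_nonneg (cut_nonneg hw S) (le_min (vol_nonneg hd S) (vol_nonneg hd Sᶜ))

lemma conductance_le_one (hsymm : ∀ u v, w u v = w v u) (hw : ∀ u v, 0 ≤ w u v)
    (hd : ∀ v, d v = ∑ u, w v u) (S : Finset V) : conductance w d S ≤ 1 := by
  have hcut : cut w S ≤ min (vol d S) (vol d Sᶜ) :=
    le_min (cut_le_vol hw hd S) (cut_compl hsymm S ▸ cut_le_vol hw hd Sᶜ)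
  exact div_le_one_of_le₀ hcut ((cut_nonneg hw S).trans hcut)

lemma mul_vol_le_cut_of_le_conductance (hw : ∀ u v, 0 ≤ w u v) (hd : ∀ v, 0 < d v) {φ : ℝ}
    (h : ∀ S : Finset V, S.Nonempty → S ≠ univ → φ ≤ conductance w d S) {S : Finset V}
    (hS : vol d S ≤ vol d univ / 2) : φ * vol d S ≤ cut w S := by
  rcases S.eq_empty_or_nonempty with rfl | hne
  · rw [vol_empty, mul_zero]
    exact cut_nonneg hw ∅
  have hpos := vol_pos hd hne
  have hmin : min (vol d S) (vol d Sᶜ) = vol d S :=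
    min_eq_left (by linarith [vol_add_vol_compl d S])
  have hφ := h S hne (by rintro rfl; linarith)
  rwa [conductance, hmin, le_div_iff₀ hpos] at hφ

lemma mul_le_cut_of_le_conductance {φ m : ℝ} (hφ : 0 ≤ φ) (hm : 0 < m) {S : Finset V}
    (hS : m ≤ vol d S) (hSc : m ≤ vol d Sᶜ) (h : φ ≤ conductance w d S) : φ * m ≤ cut w S :=
  (mul_le_mul_of_nonneg_left (le_min hS hSc) hφ).trans
    ((le_div_iff₀ (hm.trans_le (le_min hS hSc))).1 h)

lemma sum_sum_split_compl (S : Finset V) (F : V → V → ℝ) :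
    ∑ u, ∑ v, F u v = ∑ u ∈ S, ∑ v ∈ S, F u v + ∑ u ∈ S, ∑ v ∈ Sᶜ, F u v
      + (∑ u ∈ Sᶜ, ∑ v ∈ S, F u v + ∑ u ∈ Sᶜ, ∑ v ∈ Sᶜ, F u v) := by
  rw [← sum_add_sum_compl S, ← sum_add_distrib, ← sum_add_distrib]
  simp only [sum_add_sum_compl]

lemma sum_sum_mul_ite_sub (hsymm : ∀ u v, w u v = w v u) (f : ℝ → ℝ) (hf0 : f 0 = 0)
    (hf : ∀ r, f (-r) = f r) (S : Finset V) (a b : ℝ) :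
    ∑ u, ∑ v, w u v * f ((if u ∈ S then a else b) - if v ∈ S then a else b)
      = 2 * f (a - b) * cut w S := by
  have hS : ∀ v ∈ Sᶜ, v ∉ S := fun v => mem_compl.1
  have hcut : cut w S = ∑ u ∈ Sᶜ, ∑ v ∈ S, w u v := by
    rw [← cut_compl hsymm, cut, compl_compl]
  rw [sum_sum_split_compl S]
  simp +contextual only [hS, if_true, if_false, sub_self, hf0, mul_zero, sum_const_zero,
    zero_add, add_zero, ← sum_mul]
  rw [← cut, ← hcut, ← neg_sub a b, hf]
  ring

lemma totalVariation_ite (hsymm : ∀ u v, w u v = w v u) (S : Finset V) (a : ℝ) :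
    totalVariation w (fun v => if v ∈ S then a else 0) = |a| * cut w S := by
  rw [totalVariation, sum_sum_mul_ite_sub hsymm (fun r => |r|) abs_zero abs_neg S a 0, sub_zero]
  ring

lemma dirichletEnergy_ite (hsymm : ∀ u v, w u v = w v u) (S : Finset V) (a b : ℝ) :
    dirichletEnergy w (fun v => if v ∈ S then a else b) = (a - b) ^ 2 * cut w S := by
  rw [dirichletEnergy, sum_sum_mul_ite_sub hsymm (fun r => r ^ 2) (zero_pow two_ne_zero) neg_sq]
  ring

lemma sq_mul_cut_le_dirichletEnergy (hsymm : ∀ u v, w u v = w v u) (hw : ∀ u v, 0 ≤ w u v)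
    {x : V → ℝ} {S : Finset V} {δ : ℝ} (hδ : 0 ≤ δ) (hx : ∀ u ∈ S, ∀ v ∉ S, δ ≤ x u - x v) :
    δ ^ 2 * cut w S ≤ dirichletEnergy w x := by
  have hblock : ∀ u v, 0 ≤ w u v * (x u - x v) ^ 2 := fun u v => mul_nonneg (hw u v) (sq_nonneg _)
  have hSC : δ ^ 2 * cut w S ≤ ∑ u ∈ S, ∑ v ∈ Sᶜ, w u v * (x u - x v) ^ 2 := by
    simp only [cut, mul_sum]
    refine sum_le_sum fun u hu => sum_le_sum fun v hv => ?_
    rw [mul_comm]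
    exact mul_le_mul_of_nonneg_left (pow_le_pow_left₀ hδ (hx u hu v (mem_compl.1 hv)) 2) (hw u v)
  have hCS : δ ^ 2 * cut w S ≤ ∑ u ∈ Sᶜ, ∑ v ∈ S, w u v * (x u - x v) ^ 2 := by
    rw [← cut_compl hsymm S]
    simp only [cut, compl_compl, mul_sum]
    refine sum_le_sum fun u hu => sum_le_sum fun v hv => ?_
    rw [mul_comm, ← neg_sub, neg_sq]
    exact mul_le_mul_of_nonneg_left (pow_le_pow_left₀ hδ (hx v hv u (mem_compl.1 hu)) 2) (hw u v)
  have hSS := sum_nonneg fun u (_ : u ∈ S) => sum_nonneg fun v (_ : v ∈ S) => hblock u v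
  have hCC := sum_nonneg fun u (_ : u ∈ Sᶜ) => sum_nonneg fun v (_ : v ∈ Sᶜ) => hblock u v
  rw [dirichletEnergy, sum_sum_split_compl S]
  linarith

lemma eq_max_sub_add_ite {g : V → ℝ} {s : ℝ} (hs : 0 ≤ s) (hg : ∀ v, 0 ≤ g v)
    (hgs : ∀ v, 0 < g v → s ≤ g v) :
    g = (fun v => max (g v - s) 0) + fun v => if v ∈ ({v | 0 < g v} : Finset V) then s else 0 := by
  ext v
  rcases (hg v).lt_or_eq with hv | hv
  · simp [hv, hgs v hv]
  · simp [← hv, hs]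

lemma totalVariation_eq_max_sub_add (hsymm : ∀ u v, w u v = w v u) {g : V → ℝ} {s : ℝ}
    (hs : 0 ≤ s) (hg : ∀ v, 0 ≤ g v) (hgs : ∀ v, 0 < g v → s ≤ g v) :
    totalVariation w g = totalVariation w (fun v => max (g v - s) 0) + s * cut w {v | 0 < g v} := by
  conv_lhs => rw [eq_max_sub_add_ite hs hg hgs]
  rw [totalVariation_add_of_monotone, totalVariation_ite hsymm, abs_of_nonneg hs]
  intro u v huv
  have hpt : ∀ v, g v = max (g v - s) 0 + if v ∈ ({v | 0 < g v} : Finset V) then s else 0 :=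
    congrFun (eq_max_sub_add_ite hs hg hgs)
  rw [← hpt u, ← hpt v] at huv
  refine ⟨max_le_max_right 0 (by linarith), ?_⟩
  simp only [mem_filter, mem_univ, true_and]
  split_ifs <;> linarith

lemma sum_mul_eq_max_sub_add {g : V → ℝ} {s : ℝ} (hs : 0 ≤ s) (hg : ∀ v, 0 ≤ g v)
    (hgs : ∀ v, 0 < g v → s ≤ g v) :
    ∑ v, d v * g v = ∑ v, d v * max (g v - s) 0 + s * vol d {v | 0 < g v} := by
  conv_lhs => rw [eq_max_sub_add_ite hs hg hgs]
  simp only [Pi.add_apply, mul_add, sum_add_distrib, sum_mul_ite_mem]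
  ring

lemma mul_sum_le_totalVariation (hsymm : ∀ u v, w u v = w v u) {p : ℝ} (g : V → ℝ)
    (hg : ∀ v, 0 ≤ g v) (h : ∀ t, 0 ≤ t → p * vol d {v | t < g v} ≤ cut w {v | t < g v}) :
    p * ∑ v, d v * g v ≤ totalVariation w g := by
  induction hn : #{v | 0 < g v} using Nat.strong_induction_on generalizing g with
  | _ n ih =>
  rcases ({v | 0 < g v} : Finset V).eq_empty_or_nonempty with hS | hS
  · have hg0 : ∀ v, g v = 0 := fun v =>
      (hg v).antisymm' (not_lt.1 fun hv => (eq_empty_iff_forall_notMem.1 hS) v (by simpa))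
    simp [totalVariation, hg0]
  -- peel off the bottom layer `s • 𝟙_{g > 0}` of `g`; this removes a vertex from the support
  obtain ⟨v₀, hv₀, hmin⟩ := exists_min_image _ g hS
  have hs : 0 < g v₀ := (mem_filter.1 hv₀).2
  have hgs : ∀ v, 0 < g v → g v₀ ≤ g v := fun v hv => hmin v (mem_filter.2 ⟨mem_univ v, hv⟩)
  set s := g v₀
  have hlevel : ∀ t, 0 ≤ t →
      ({v | t < max (g v - s) 0} : Finset V) = ({v | t + s < g v} : Finset V) := by
    intro t ht
    ext v
    simp [not_lt.2 ht, lt_sub_iff_add_lt]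
  have hcard : #{v | 0 < max (g v - s) 0} < n := by
    rw [← hn, hlevel 0 le_rfl, zero_add]
    refine card_lt_card ⟨monotone_filter_right _ fun v _ hv => hs.trans hv, fun hsub => ?_⟩
    simpa [s] using hsub hv₀
  have hpeeled := ih _ hcard (fun v => max (g v - s) 0) (fun v => le_max_right _ _)
    (fun t ht => hlevel t ht ▸ h (t + s) (by linarith)) rfl
  rw [sum_mul_eq_max_sub_add hs.le hg hgs, totalVariation_eq_max_sub_add hsymm hs.le hg hgs]
  nlinarith [h 0 le_rfl]

lemma sq_mul_sum_sq_le_two_mul_dirichletEnergy_of_nonneg (hsymm : ∀ u v, w u v = w v u)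
    (hw : ∀ u v, 0 ≤ w u v) (hd : ∀ v, d v = ∑ u, w v u) {φ : ℝ} (hφ : 0 ≤ φ) {g : V → ℝ}
    (hg : ∀ v, 0 ≤ g v) (h : ∀ S ⊆ ({v | 0 < g v} : Finset V), φ * vol d S ≤ cut w S) :
    φ ^ 2 * ∑ v, d v * g v ^ 2 ≤ 2 * dirichletEnergy w g := by
  set D := ∑ v, d v * g v ^ 2
  have hD : 0 ≤ D := sum_nonneg fun v _ => mul_nonneg (degree_nonneg hw hd v) (sq_nonneg _)
  -- the superlevel sets of `g ^ 2` lie in the support of `g`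
  have hcoarea : φ * D ≤ totalVariation w (g ^ 2) :=
    mul_sum_le_totalVariation hsymm (g ^ 2) (fun v => sq_nonneg (g v)) fun t ht =>
      h _ fun v hv => mem_filter.2 ⟨mem_univ v, by
        have := (mem_filter.1 hv).2
        simp only [Pi.pow_apply] at this
        nlinarith [hg v]⟩
  have hCS : totalVariation w (g ^ 2) ^ 2 ≤ 2 * dirichletEnergy w g * D := by
    have hsq : ∀ u v, |(g ^ 2) u - (g ^ 2) v| = |g u - g v| * (g u + g v) := fun u v => by
      rw [Pi.pow_apply, Pi.pow_apply, sq_sub_sq, abs_mul,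
        abs_of_nonneg (add_nonneg (hg u) (hg v)), mul_comm]
    have := sq_sum_sum_mul_le hw (fun u v => |g u - g v|) (fun u v => g u + g v)
    simp only [sq_abs] at this
    rw [totalVariation, dirichletEnergy]
    simp only [hsq]
    nlinarith [sum_sum_mul_add_sq_le hsymm hw hd g,
      sum_nonneg fun u (_ : u ∈ univ) => sum_nonneg fun v (_ : v ∈ univ) =>
        mul_nonneg (hw u v) (sq_nonneg (g u - g v))]
  rcases hD.eq_or_lt with hD0 | hDpos
  · rw [← hD0, mul_zero]
    linarith [dirichletEnergy_nonneg hw g]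
  · refine le_of_mul_le_mul_right ?_ hDpos
    nlinarith [mul_nonneg hφ hD]

lemma sq_mul_sum_sq_le_two_mul_dirichletEnergy [Nonempty V] (hsymm : ∀ u v, w u v = w v u)
    (hw : ∀ u v, 0 ≤ w u v) (hd : ∀ v, d v = ∑ u, w v u) (hd_pos : ∀ v, 0 < d v) {φ : ℝ}
    (hφ : 0 ≤ φ) (h : ∀ S : Finset V, S.Nonempty → S ≠ univ → φ ≤ conductance w d S)
    {x : V → ℝ} (hx : ∑ v, d v * x v = 0) :
    φ ^ 2 * ∑ v, d v * x v ^ 2 ≤ 2 * dirichletEnergy w x := by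
  have hd0 := degree_nonneg hw hd
  have hcut : ∀ S, vol d S ≤ vol d univ / 2 → φ * vol d S ≤ cut w S := fun S =>
    mul_vol_le_cut_of_le_conductance hw hd_pos h
  obtain ⟨c, hc₁, hc₂⟩ := exists_weighted_median hd0 x
  -- both `(x - c)⁺` and `(x - c)⁻` are supported on at most half of the volume
  set g₁ : V → ℝ := fun v => (x v - c)⁺
  set g₂ : V → ℝ := fun v => (x v - c)⁻
  have h₁ := sq_mul_sum_sq_le_two_mul_dirichletEnergy_of_nonneg hsymm hw hd hφ (g := g₁)
    (fun v => posPart_nonneg _) fun S hS => hcut S <| (sum_le_sum_of_subset_of_nonneg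
      (fun v hv => by simpa [g₁, sub_pos] using hS hv) fun v _ _ => hd0 v).trans hc₁
  have h₂ := sq_mul_sum_sq_le_two_mul_dirichletEnergy_of_nonneg hsymm hw hd hφ (g := g₂)
    (fun v => negPart_nonneg _) fun S hS => hcut S <| (sum_le_sum_of_subset_of_nonneg
      (fun v hv => by simpa [g₂, sub_neg] using hS hv) fun v _ _ => hd0 v).trans hc₂
  have hmass : ∑ v, d v * x v ^ 2 ≤ ∑ v, d v * g₁ v ^ 2 + ∑ v, d v * g₂ v ^ 2 := by
    have hexp : ∑ v, d v * (x v - c) ^ 2 = ∑ v, d v * x v ^ 2 + c ^ 2 * ∑ v, d v := by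
      have hterm : ∀ v, d v * (x v - c) ^ 2 = d v * x v ^ 2 - 2 * c * (d v * x v) + c ^ 2 * d v :=
        fun v => by ring
      simp only [hterm, sum_add_distrib, sum_sub_distrib, ← mul_sum, hx]
      ring
    rw [← sum_add_distrib]
    simp only [g₁, g₂, ← mul_add, posPart_sq_add_negPart_sq, hexp]
    nlinarith [sum_nonneg fun v (_ : v ∈ univ) => hd0 v, sq_nonneg c]
  have henergy : dirichletEnergy w g₁ + dirichletEnergy w g₂ ≤ dirichletEnergy w x := by
    simp only [dirichletEnergy, ← mul_add, ← sum_add_distrib]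
    refine mul_le_mul_of_nonneg_left (sum_le_sum fun u _ => sum_le_sum fun v _ =>
      mul_le_mul_of_nonneg_left ?_ (hw u v)) (by norm_num)
    simpa using sq_posPart_sub_add_sq_negPart_sub_le (x u - c) (x v - c)
  nlinarith

lemma exists_dirichletEnergy_le_two_mul_conductance (hsymm : ∀ u v, w u v = w v u)
    (hw : ∀ u v, 0 ≤ w u v) (hV : 0 < vol d univ) {μ : ℝ} (hμ : 0 < μ) {S : Finset V}
    (hS₁ : μ * vol d univ ≤ vol d S) (hS₂ : vol d S ≤ (1 - μ) * vol d univ) :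
    ∃ x : V → ℝ, ∑ v, d v * x v = 0 ∧ ∑ v, d v * x v ^ 2 = 1 ∧
      (∀ v, √(μ / ((1 - μ) * vol d univ)) ≤ |x v| ∧
        |x v| ≤ √((1 - μ) / (μ * vol d univ))) ∧
      dirichletEnergy w x ≤ 2 * conductance w d S := by
  set s := vol d S
  set t := vol d Sᶜ
  have hst : s + t = vol d univ := vol_add_vol_compl d S
  have hμ1 : μ < 1 := by nlinarith
  have hs : 0 < s := lt_of_lt_of_le (by positivity) hS₁
  have ht : 0 < t := by nlinarith
  set r := √(s * t * vol d univ) with hr_def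
  have hr : 0 < r := Real.sqrt_pos.2 (by positivity)
  have hr2 : r ^ 2 = s * t * vol d univ := Real.sq_sqrt (by positivity)
  refine ⟨fun v => if v ∈ S then t / r else -(s / r), ?_, ?_, fun v => ?_, ?_⟩
  · rw [sum_mul_ite_mem]
    ring
  · simp only [apply_ite (· ^ 2), sum_mul_ite_mem]
    rw [neg_sq, div_pow, div_pow, hr2, ← hst]
    field_simp
    ring
  · dsimp only
    split_ifs
    · rw [abs_of_pos (div_pos ht hr), div_sqrt_mul_mul_eq_sqrt hs ht hV]
      exact sqrt_div_mem_Icc hμ hμ1 hs hV (by nlinarith) (by nlinarith)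
    · rw [abs_neg, abs_of_pos (div_pos hs hr), hr_def, mul_comm s t,
        div_sqrt_mul_mul_eq_sqrt ht hs hV]
      exact sqrt_div_mem_Icc hμ hμ1 ht hV (by nlinarith) (by nlinarith)
  · rw [dirichletEnergy_ite hsymm, conductance]
    calc (t / r - -(s / r)) ^ 2 * cut w S = (s + t) / (s * t) * cut w S := by
          rw [sub_neg_eq_add, ← add_div, div_pow, hr2, ← hst]
          field_simp
          ring
      _ ≤ 2 / min s t * cut w S :=
          mul_le_mul_of_nonneg_right (add_div_mul_le_two_div_min hs ht) (cut_nonneg hw S)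
      _ = 2 * (cut w S / min s t) := by ring

lemma mul_vol_compl_le_of_sum_mul_eq_zero (hd0 : ∀ v, 0 ≤ d v) {x : V → ℝ}
    (hx : ∑ v, d v * x v = 0) {m M : ℝ} (hxb : ∀ v, m ≤ |x v| ∧ |x v| ≤ M) {S : Finset V}
    (hS : ∀ v ∉ S, x v ≤ 0) : m * vol d Sᶜ ≤ M * vol d S := by
  have hsplit := sum_add_sum_compl S fun v => d v * x v
  have hle : ∑ v ∈ S, d v * x v ≤ M * vol d S := by
    rw [vol, mul_sum]
    exact sum_le_sum fun v _ => by
      rw [mul_comm M]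
      exact mul_le_mul_of_nonneg_left ((le_abs_self _).trans (hxb v).2) (hd0 v)
  have hge : m * vol d Sᶜ ≤ -∑ v ∈ Sᶜ, d v * x v := by
    rw [vol, mul_sum, ← sum_neg_distrib]
    exact sum_le_sum fun v hv => by
      rw [mul_comm m, ← mul_neg, ← abs_of_nonpos (hS v (mem_compl.1 hv))]
      exact mul_le_mul_of_nonneg_left (hxb v).1 (hd0 v)
  linarith

lemma vol_filter_pos_mem_Icc (hd0 : ∀ v, 0 ≤ d v) {x : V → ℝ} (hx : ∑ v, d v * x v = 0)
    {μ m M : ℝ} (hm : 0 < m) (hmM : μ * M = (1 - μ) * m) (hμ : 0 < μ)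
    (hxb : ∀ v, m ≤ |x v| ∧ |x v| ≤ M) :
    vol d {v | 0 < x v} ∈ Set.Icc (μ * vol d univ) ((1 - μ) * vol d univ) := by
  set P : Finset V := {v | 0 < x v}
  have h₁ := mul_vol_compl_le_of_sum_mul_eq_zero hd0 hx hxb (S := P) fun v hv => by
    simpa [P] using hv
  have h₂ := mul_vol_compl_le_of_sum_mul_eq_zero hd0 (x := -x)
    (by simp only [Pi.neg_apply, mul_neg, sum_neg_distrib, hx, neg_zero])
    (fun v => by simpa using hxb v) (S := Pᶜ) fun v hv =>
      neg_nonpos.2 (le_of_lt (by simpa [P] using hv))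
  rw [compl_compl] at h₂
  have hsplit := vol_add_vol_compl d P
  have hP : μ * vol d Pᶜ ≤ (1 - μ) * vol d P := le_of_mul_le_mul_left (by
    nlinarith [mul_le_mul_of_nonneg_left h₁ hμ.le, congrArg (· * vol d P) hmM]) hm
  have hPc : μ * vol d P ≤ (1 - μ) * vol d Pᶜ := le_of_mul_le_mul_left (by
    nlinarith [mul_le_mul_of_nonneg_left h₂ hμ.le, congrArg (· * vol d Pᶜ) hmM]) hm
  constructor <;> nlinarith

lemma sq_div_one_sub_mul_le_two_mul_dirichletEnergy (hsymm : ∀ u v, w u v = w v u)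
    (hw : ∀ u v, 0 ≤ w u v) (hd : ∀ v, d v = ∑ u, w v u) (hV : 0 < vol d univ) {μ φ : ℝ}
    (hμ : 0 < μ) (hμ2 : μ ≤ 1 / 2) (hφ : 0 ≤ φ)
    (h : ∀ S, μ * vol d univ ≤ vol d S → vol d S ≤ (1 - μ) * vol d univ →
      φ ≤ conductance w d S)
    {x : V → ℝ} (hx : ∑ v, d v * x v = 0)
    (hxb : ∀ v, √(μ / ((1 - μ) * vol d univ)) ≤ |x v| ∧
      |x v| ≤ √((1 - μ) / (μ * vol d univ))) :
    (μ / (1 - μ) * φ) ^ 2 ≤ 2 * dirichletEnergy w x := by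
  have h1μ : 0 < 1 - μ := by linarith
  set m := √(μ / ((1 - μ) * vol d univ))
  have hm : 0 < m := Real.sqrt_pos.2 (by positivity)
  have hm2 : m ^ 2 * (μ * vol d univ) = μ ^ 2 / (1 - μ) := by
    rw [Real.sq_sqrt (by positivity)]
    field_simp
  obtain ⟨hP₁, hP₂⟩ := vol_filter_pos_mem_Icc (degree_nonneg hw hd) hx hm
    (mul_sqrt_div_eq hμ (by linarith) hV) hμ hxb
  have hcut : φ * (μ * vol d univ) ≤ cut w {v | 0 < x v} :=
    mul_le_cut_of_le_conductance hφ (by positivity) hP₁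
      (by linarith [vol_add_vol_compl d {v | 0 < x v}]) (h _ hP₁ hP₂)
  have hjump : (2 * m) ^ 2 * cut w {v | 0 < x v} ≤ dirichletEnergy w x := by
    refine sq_mul_cut_le_dirichletEnergy hsymm hw (by positivity) fun u hu v hv => ?_
    have hu' : 0 < x u := (mem_filter.1 hu).2
    have hv' : x v ≤ 0 := by simpa using hv
    linarith [abs_of_pos hu' ▸ (hxb u).1, abs_of_nonpos hv' ▸ (hxb v).1]
  have hφ8 : φ / (1 - μ) ≤ 8 :=
    (div_le_iff₀ h1μ).2 (by linarith [(h _ hP₁ hP₂).trans (conductance_le_one hsymm hw hd _)])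
  calc (μ / (1 - μ) * φ) ^ 2 = μ ^ 2 / (1 - μ) * φ * (φ / (1 - μ)) := by ring
    _ ≤ μ ^ 2 / (1 - μ) * φ * 8 := by gcongr
    _ = 8 * m ^ 2 * (φ * (μ * vol d univ)) := by rw [← hm2]; ring
    _ ≤ 8 * m ^ 2 * cut w {v | 0 < x v} := by gcongr
    _ ≤ 2 * dirichletEnergy w x := by linarith

end WeightedGraph

end

open WeightedGraph

theorem mu_conductance_cheeger_general {V : Type*} [Fintype V] [DecidableEq V] [Nonempty V]
    (w : V → V → ℝ)
    (hw_symm : ∀ u v, w u v = w v u)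
    (hw_nonneg : ∀ u v, 0 ≤ w u v)
    (d : V → ℝ) (hd : ∀ v, d v = ∑ u, w v u)
    (hd_pos : ∀ v, 0 < d v)
    (vol : Finset V → ℝ) (hvol : ∀ S : Finset V, vol S = ∑ v ∈ S, d v)
    (cut : Finset V → ℝ) (hcut : ∀ S : Finset V, cut S = ∑ u ∈ S, ∑ v ∈ Sᶜ, w u v)
    (phi : Finset V → ℝ) (hphi : ∀ S : Finset V, phi S = cut S / min (vol S) (vol Sᶜ))
    (QL QD : (V → ℝ) → ℝ)
    (hQL : ∀ x : V → ℝ, QL x = (1/2) * ∑ u, ∑ v, w u v * (x u - x v)^2)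
    (hQD : ∀ x : V → ℝ, QD x = ∑ v, d v * x v ^ 2)
    (μ : ℝ) (hμ0 : 0 < μ) (hμhalf : μ ≤ 1/2)
    (phi0 : ℝ)
    (hphi0 : IsLeast {y : ℝ | ∃ S : Finset V, S.Nonempty ∧ S ≠ Finset.univ ∧ y = phi S} phi0)
    (phimu : ℝ)
    (hphimu : IsLeast {y : ℝ | ∃ S : Finset V,
        μ * vol Finset.univ ≤ vol S ∧ vol S ≤ (1 - μ) * vol Finset.univ ∧ y = phi S} phimu)
    (lam : ℝ)
    (hlam : IsGLB {y : ℝ | ∃ x : V → ℝ,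
        (∑ v, d v * x v) = 0 ∧ QD x = 1 ∧
        (∀ v, Real.sqrt (μ / ((1 - μ) * vol Finset.univ)) ≤ |x v| ∧
              |x v| ≤ Real.sqrt ((1 - μ) / (μ * vol Finset.univ))) ∧ y = QL x} lam)
    :
    2 * phimu ≥ lam ∧
    lam ≥ (1/2) * max
      (min ((μ / (1 - μ) * phimu)^2)
           (((μ^2 * phimu + (1 - 2*μ) * phi0) / (1 - μ - μ^2))^2))
      (phi0^2) := by
  obtain rfl : vol = WeightedGraph.vol d := funext hvol
  obtain rfl : cut = WeightedGraph.cut w := funext hcut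
  obtain rfl : phi = conductance w d := funext hphi
  obtain rfl : QL = dirichletEnergy w := funext hQL
  have hV : 0 < vol d univ := vol_pos hd_pos univ_nonempty
  have hphi_nonneg : ∀ S, 0 ≤ conductance w d S :=
    conductance_nonneg hw_nonneg fun v => (hd_pos v).le
  obtain ⟨S₀, hS₁, hS₂, rfl⟩ := hphimu.1
  constructor
  · obtain ⟨x, hx, hxD, hxb, hE⟩ :=
      exists_dirichletEnergy_le_two_mul_conductance hw_symm hw_nonneg hV hμ0 hS₁ hS₂
    exact (hlam.1 ⟨x, hx, hQD x ▸ hxD, hxb, rfl⟩).trans hE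
  refine hlam.2 ?_
  rintro _ ⟨x, hx, hxD, hxb, rfl⟩
  have hμ := sq_div_one_sub_mul_le_two_mul_dirichletEnergy hw_symm hw_nonneg hd hV hμ0 hμhalf
    (hphi_nonneg S₀) (fun S h₁ h₂ => hphimu.2 ⟨S, h₁, h₂, rfl⟩) hx hxb
  have hcheeger := sq_mul_sum_sq_le_two_mul_dirichletEnergy hw_symm hw_nonneg hd hd_pos
    (by obtain ⟨S, -, -, rfl⟩ := hphi0.1; exact hphi_nonneg S)
    (fun S h₁ h₂ => hphi0.2 ⟨S, h₁, h₂, rfl⟩) hx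
  rw [← hQD, hxD, mul_one] at hcheeger
  calc 1 / 2 * max (min _ _) _ ≤ 1 / 2 * (2 * dirichletEnergy w x) :=
        mul_le_mul_of_nonneg_left (max_le ((min_le_left _ _).trans hμ) hcheeger) (by norm_num)
    _ = dirichletEnergy w x := by ring

theorem mu_conductance_cheeger {V : Type*} [Fintype V] [DecidableEq V] [Nonempty V]
    (w : V → V → ℝ)
    (hw_symm : ∀ u v, w u v = w v u)
    (hw_nonneg : ∀ u v, 0 ≤ w u v)
    (hw_loop : ∀ v, w v v = 0)
    (d : V → ℝ) (hd : ∀ v, d v = ∑ u, w v u)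
    (hd_pos : ∀ v, 0 < d v)
    (vol : Finset V → ℝ) (hvol : ∀ S : Finset V, vol S = ∑ v ∈ S, d v)
    (cut : Finset V → ℝ) (hcut : ∀ S : Finset V, cut S = ∑ u ∈ S, ∑ v ∈ Sᶜ, w u v)
    (phi : Finset V → ℝ) (hphi : ∀ S : Finset V, phi S = cut S / min (vol S) (vol Sᶜ))
    (QL QD : (V → ℝ) → ℝ)
    (hQL : ∀ x : V → ℝ, QL x = (1/2) * ∑ u, ∑ v, w u v * (x u - x v)^2)
    (hQD : ∀ x : V → ℝ, QD x = ∑ v, d v * x v ^ 2)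
    (μ : ℝ) (hμ0 : 0 < μ) (hμhalf : μ ≤ 1/2)
    (phi0 : ℝ)
    (hphi0 : IsLeast {y : ℝ | ∃ S : Finset V, S.Nonempty ∧ S ≠ Finset.univ ∧ y = phi S} phi0)
    (phimu : ℝ)
    (hphimu : IsLeast {y : ℝ | ∃ S : Finset V,
        μ * vol Finset.univ ≤ vol S ∧ vol S ≤ (1 - μ) * vol Finset.univ ∧ y = phi S} phimu)
    (lam : ℝ)
    (hlam : IsGLB {y : ℝ | ∃ x : V → ℝ,
        (∑ v, d v * x v) = 0 ∧ QD x = 1 ∧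
        (∀ v, Real.sqrt (μ / ((1 - μ) * vol Finset.univ)) ≤ |x v| ∧
              |x v| ≤ Real.sqrt ((1 - μ) / (μ * vol Finset.univ))) ∧ y = QL x} lam)
    :
    2 * phimu ≥ lam ∧
    lam ≥ (1/2) * max
      (min ((μ / (1 - μ) * phimu)^2)
           (((μ^2 * phimu + (1 - 2*μ) * phi0) / (1 - μ - μ^2))^2))
      (phi0^2) :=
  mu_conductance_cheeger_general w hw_symm hw_nonneg d hd hd_pos vol hvol cut hcut phi hphi QL QD
    hQL hQD μ hμ0 hμhalf phi0 hphi0 phimu hphimu lam hlam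
end

section
/- Let 0 < μ ≤ 1/2 and assume there exists a set S ⊆ V with μ·Vol(G) ≤ Vol(S) ≤ (1−μ)·Vol(G). Then λ_μ(G) ≤ 2·φ_μ(G). -/
/-!
Let `S` attain `φ_μ`, write `s = Vol S`, `c = Vol Sᶜ`, and test the Rayleigh quotient on the
vector equal to `c r` on `S` and `-s r` off `S`, where `r = (s c Vol G)^{-1/2}`. It has mean zero
and `Q_D = 1`; its squared entries are `c / (s Vol G)` and `s / (c Vol G)`, so the μ-balance of `S`
is exactly the pointwise constraint. Only edges across the cut contribute to `Q_L`, giving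
`Q_L = |∂S| (1/s + 1/c) ≤ 2 |∂S| / min s c = 2 φ(S)`.
-/

open Finset

section TwoValued

variable {V : Type*} [Fintype V] [DecidableEq V] (S : Finset V) (a b : ℝ)

lemma sum_mul_comp_piecewise_const (d : V → ℝ) (g : ℝ → ℝ) :
    ∑ v, d v * g (S.piecewise (fun _ => a) (fun _ => b) v)
      = (∑ v ∈ S, d v) * g a + (∑ v ∈ Sᶜ, d v) * g b := by
  rw [← sum_add_sum_compl S, sum_mul, sum_mul]
  congr 1
  · exact sum_congr rfl fun v hv => by rw [piecewise_eq_of_mem _ _ _ hv]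
  · exact sum_congr rfl fun v hv => by rw [piecewise_eq_of_notMem _ _ _ (mem_compl.1 hv)]

lemma half_sum_mul_sq_sub_piecewise_const (w : V → V → ℝ) (hw : ∀ u v, w u v = w v u) :
    (1 / 2) * ∑ u, ∑ v, w u v * (S.piecewise (fun _ => a) (fun _ => b) u
        - S.piecewise (fun _ => a) (fun _ => b) v) ^ 2
      = (∑ u ∈ S, ∑ v ∈ Sᶜ, w u v) * (a - b) ^ 2 := by
  set x := S.piecewise (fun _ => a) (fun _ => b)
  have hxS : ∀ v ∈ S, x v = a := fun v hv => piecewise_eq_of_mem _ _ _ hv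
  have hxSc : ∀ v ∈ Sᶜ, x v = b := fun v hv => piecewise_eq_of_notMem _ _ _ (mem_compl.1 hv)
  have hS : ∀ u ∈ S, ∑ v, w u v * (x u - x v) ^ 2 = ∑ v ∈ Sᶜ, w u v * (a - b) ^ 2 := by
    intro u hu
    rw [← sum_add_sum_compl S, sum_eq_zero fun v hv => by rw [hxS u hu, hxS v hv]; ring,
      zero_add]
    exact sum_congr rfl fun v hv => by rw [hxS u hu, hxSc v hv]
  have hSc : ∀ u ∈ Sᶜ, ∑ v, w u v * (x u - x v) ^ 2 = ∑ v ∈ S, w v u * (a - b) ^ 2 := by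
    intro u hu
    rw [← sum_add_sum_compl S,
      sum_eq_zero (s := Sᶜ) fun v hv => by rw [hxSc u hu, hxSc v hv]; ring, add_zero]
    exact sum_congr rfl fun v hv => by rw [hxSc u hu, hxS v hv, hw]; ring
  rw [← sum_add_sum_compl S, sum_congr rfl hS, sum_congr rfl hSc, sum_comm (s := Sᶜ)]
  simp only [← sum_mul]
  ring

end TwoValued

lemma sqrt_le_abs_mul_le_sqrt_of_balanced {μ T a b r : ℝ} (hμ : 0 < μ) (hT : 0 < T)
    (ha : μ * T ≤ a) (ha' : a ≤ (1 - μ) * T) (hab : a + b = T)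
    (hr : r ^ 2 * (a * b * T) = 1) :
    √(μ / ((1 - μ) * T)) ≤ |a * r| ∧ |a * r| ≤ √((1 - μ) / (μ * T)) := by
  have ha0 : 0 < a := (mul_pos hμ hT).trans_le ha
  have hb : μ * T ≤ b := by linarith
  have hb0 : 0 < b := (mul_pos hμ hT).trans_le hb
  have hμ1 : 0 < 1 - μ := pos_of_mul_pos_left (ha0.trans_le ha') hT.le
  have hsq : (a * r) ^ 2 = a / (b * T) := by
    rw [eq_div_iff (by positivity)]
    linear_combination a * hr
  rw [← Real.sqrt_sq_eq_abs, hsq]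
  constructor <;> apply Real.sqrt_le_sqrt <;> rw [div_le_div_iff₀ (by positivity) (by positivity)]
  · nlinarith
  · nlinarith

lemma mul_inv_add_inv_le_two_mul_div_min {k s c : ℝ} (hk : 0 ≤ k) (hs : 0 < s) (hc : 0 < c) :
    k * (s⁻¹ + c⁻¹) ≤ 2 * (k / min s c) := by
  have hmin : 0 < min s c := lt_min hs hc
  calc k * (s⁻¹ + c⁻¹) ≤ k * ((min s c)⁻¹ + (min s c)⁻¹) :=
        mul_le_mul_of_nonneg_left
          (add_le_add (inv_anti₀ hmin (min_le_left s c)) (inv_anti₀ hmin (min_le_right s c))) hk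
    _ = 2 * (k / min s c) := by ring

theorem mu_conductance_cheeger_upper_general {V : Type*} [Fintype V] [DecidableEq V] [Nonempty V]
    (w : V → V → ℝ)
    (hw_symm : ∀ u v, w u v = w v u)
    (hw_nonneg : ∀ u v, 0 ≤ w u v)
    (d : V → ℝ)
    (hd_pos : ∀ v, 0 < d v)
    (vol : Finset V → ℝ) (hvol : ∀ S : Finset V, vol S = ∑ v ∈ S, d v)
    (cut : Finset V → ℝ) (hcut : ∀ S : Finset V, cut S = ∑ u ∈ S, ∑ v ∈ Sᶜ, w u v)
    (phi : Finset V → ℝ) (hphi : ∀ S : Finset V, phi S = cut S / min (vol S) (vol Sᶜ))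
    (QL QD : (V → ℝ) → ℝ)
    (hQL : ∀ x : V → ℝ, QL x = (1/2) * ∑ u, ∑ v, w u v * (x u - x v)^2)
    (hQD : ∀ x : V → ℝ, QD x = ∑ v, d v * x v ^ 2)
    (μ : ℝ) (hμ0 : 0 < μ)
    (phimu : ℝ)
    (hphimu : IsLeast {y : ℝ | ∃ S : Finset V,
        μ * vol Finset.univ ≤ vol S ∧ vol S ≤ (1 - μ) * vol Finset.univ ∧ y = phi S} phimu)
    (lam : ℝ)
    (hlam : IsGLB {y : ℝ | ∃ x : V → ℝ,
        (∑ v, d v * x v) = 0 ∧ QD x = 1 ∧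
        (∀ v, Real.sqrt (μ / ((1 - μ) * vol Finset.univ)) ≤ |x v| ∧
              |x v| ≤ Real.sqrt ((1 - μ) / (μ * vol Finset.univ))) ∧ y = QL x} lam)
    :
    lam ≤ 2 * phimu := by
  obtain ⟨⟨S, hμS, hSμ, rfl⟩, -⟩ := hphimu
  set s := vol S
  set c := vol Sᶜ
  have hT : s + c = vol univ := by simp only [s, c, hvol]; exact sum_add_sum_compl S d
  have hTpos : 0 < vol univ := by rw [hvol]; exact sum_pos (fun v _ => hd_pos v) univ_nonempty
  have hs : 0 < s := (mul_pos hμ0 hTpos).trans_le hμS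
  have hc : 0 < c := by linarith [mul_pos hμ0 hTpos]
  set r := (√(s * c * vol univ))⁻¹
  have hr : r ^ 2 * (s * c * vol univ) = 1 := by
    rw [inv_pow, Real.sq_sqrt (by positivity), inv_mul_cancel₀ (by positivity)]
  clear_value r
  refine (hlam.1 ⟨S.piecewise (fun _ => c * r) (fun _ => -(s * r)),
    ?_, ?_, fun v => ?_, rfl⟩).trans ?_
  · refine (sum_mul_comp_piecewise_const S _ _ d id).trans ?_
    rw [← hvol, ← hvol, id, id]
    ring
  · rw [hQD]
    refine (sum_mul_comp_piecewise_const S _ _ d (· ^ 2)).trans ?_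
    rw [← hvol, ← hvol]
    linear_combination s * c * r ^ 2 * hT + hr
  · by_cases hv : v ∈ S
    · rw [piecewise_eq_of_mem _ _ _ hv]
      exact sqrt_le_abs_mul_le_sqrt_of_balanced hμ0 hTpos (by linarith) (by linarith)
        (add_comm s c ▸ hT) (by linear_combination hr)
    · rw [piecewise_eq_of_notMem _ _ _ hv, abs_neg]
      exact sqrt_le_abs_mul_le_sqrt_of_balanced hμ0 hTpos hμS hSμ hT hr
  · have hTr : (c * r - -(s * r)) ^ 2 = s⁻¹ + c⁻¹ := by
      field_simp
      linear_combination (c + s) * hr + (c + s) * r ^ 2 * s * c * hT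
    rw [hQL, half_sum_mul_sq_sub_piecewise_const S _ _ w hw_symm, ← hcut, hTr, hphi]
    refine mul_inv_add_inv_le_two_mul_div_min ?_ hs hc
    rw [hcut]
    exact sum_nonneg fun u _ => sum_nonneg fun v _ => hw_nonneg u v

theorem mu_conductance_cheeger_upper {V : Type*} [Fintype V] [DecidableEq V] [Nonempty V]
    (w : V → V → ℝ)
    (hw_symm : ∀ u v, w u v = w v u)
    (hw_nonneg : ∀ u v, 0 ≤ w u v)
    (hw_loop : ∀ v, w v v = 0)
    (d : V → ℝ) (hd : ∀ v, d v = ∑ u, w v u)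
    (hd_pos : ∀ v, 0 < d v)
    (vol : Finset V → ℝ) (hvol : ∀ S : Finset V, vol S = ∑ v ∈ S, d v)
    (cut : Finset V → ℝ) (hcut : ∀ S : Finset V, cut S = ∑ u ∈ S, ∑ v ∈ Sᶜ, w u v)
    (phi : Finset V → ℝ) (hphi : ∀ S : Finset V, phi S = cut S / min (vol S) (vol Sᶜ))
    (QL QD : (V → ℝ) → ℝ)
    (hQL : ∀ x : V → ℝ, QL x = (1/2) * ∑ u, ∑ v, w u v * (x u - x v)^2)
    (hQD : ∀ x : V → ℝ, QD x = ∑ v, d v * x v ^ 2)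
    (μ : ℝ) (hμ0 : 0 < μ) (hμhalf : μ ≤ 1/2)
    (phimu : ℝ)
    (hphimu : IsLeast {y : ℝ | ∃ S : Finset V,
        μ * vol Finset.univ ≤ vol S ∧ vol S ≤ (1 - μ) * vol Finset.univ ∧ y = phi S} phimu)
    (lam : ℝ)
    (hlam : IsGLB {y : ℝ | ∃ x : V → ℝ,
        (∑ v, d v * x v) = 0 ∧ QD x = 1 ∧
        (∀ v, Real.sqrt (μ / ((1 - μ) * vol Finset.univ)) ≤ |x v| ∧
              |x v| ≤ Real.sqrt ((1 - μ) / (μ * vol Finset.univ))) ∧ y = QL x} lam)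
    :
    lam ≤ 2 * phimu :=
  mu_conductance_cheeger_upper_general w hw_symm hw_nonneg d hd_pos vol hvol cut hcut phi hphi QL QD
    hQL hQD μ hμ0 phimu hphimu lam hlam
end

section
/- Let 0 < μ ≤ 1/2 and assume there exists a set S ⊆ V with μ·Vol(G) ≤ Vol(S) ≤ (1−μ)·Vol(G). Then λ_μ(G) ≥ φ_0(G)²/2. -/
/-!
`λ_μ` is an infimum over a subset of the vectors defining `λ₂`, so it suffices to prove the easy
half of Cheeger's inequality: `φ₀² Q_D(x) ≤ 2 Q_L(x)` whenever `Σ d x = 0`. Shifting `x` by a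
weighted median `m` only increases `Q_D`, and `x - m` splits into a positive and a negative part,
each supported on at most half the volume, whose energies add up to at most `Q_L(x)`. For `h ≥ 0`
with such support, the discrete co-area formula gives `Σ w (h(u)² - h(v)²)⁺ ≥ φ₀ Σ d h²`, and
Cauchy–Schwarz against `Σ w (h(u) + h(v))² ≤ 4 Σ d h²` turns this into `φ₀² Σ d h² ≤ Σ w (h(u) - h(v))²`.
-/

open Finset

lemma posPart_mul_negPart_eq_zero (a : ℝ) : a⁺ * a⁻ = 0 := by
  rcases le_total a 0 with ha | ha
  · rw [posPart_eq_zero.2 ha, zero_mul]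
  · rw [negPart_eq_zero.2 ha, mul_zero]

lemma sq_eq_posPart_sq_add_negPart_sq (a : ℝ) : a ^ 2 = a⁺ ^ 2 + a⁻ ^ 2 := by
  nth_rw 1 [← posPart_sub_negPart a]
  linear_combination (-2) * posPart_mul_negPart_eq_zero a

lemma eq_mul_ite_add_posPart_sub {a c : ℝ} (ha : 0 ≤ a) (hc : 0 ≤ c) (hca : 0 < a → c ≤ a) :
    a = c * (if 0 < a then 1 else 0) + (a - c)⁺ := by
  rcases ha.eq_or_lt with rfl | ha
  · simp [posPart_eq_zero.2 (neg_nonpos.2 hc)]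
  · simp [ha, posPart_eq_self.2 (sub_nonneg.2 (hca ha))]

lemma posPart_sub_eq_mul_ite_add_posPart_sub {a b c : ℝ} (ha : 0 ≤ a) (hb : 0 ≤ b) (hc : 0 ≤ c)
    (hca : 0 < a → c ≤ a) (hcb : 0 < b → c ≤ b) :
    (a - b)⁺ = c * (if 0 < a ∧ ¬0 < b then 1 else 0) + ((a - c)⁺ - (b - c)⁺)⁺ := by
  rcases ha.eq_or_lt with rfl | ha <;> rcases hb.eq_or_lt with rfl | hb
  · simp [posPart_eq_zero.2 (neg_nonpos.2 hc)]
  · simp [posPart_eq_zero.2 (neg_nonpos.2 hc), posPart_eq_self.2 (sub_nonneg.2 (hcb hb)), hb.le,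
      posPart_eq_zero.2 (sub_nonpos.2 (hcb hb))]
  · simp [posPart_eq_zero.2 (neg_nonpos.2 hc), posPart_eq_self.2 (sub_nonneg.2 (hca ha)), ha,
      ha.le]
  · simp [posPart_eq_self.2 (sub_nonneg.2 (hca ha)), posPart_eq_self.2 (sub_nonneg.2 (hcb hb)),
      ha, hb]

section Graph

variable {V : Type*} [Fintype V]

lemma mul_sum_le_cut_of_le_div_min [DecidableEq V] (w : V → V → ℝ) (hw_nonneg : ∀ u v, 0 ≤ w u v)
    (d : V → ℝ) (hd_nonneg : ∀ v, 0 ≤ d v) (φ : ℝ) (S : Finset V)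
    (hS : ∑ v ∈ S, d v ≤ (∑ v, d v) / 2)
    (hφ : S.Nonempty → S ≠ univ →
      φ ≤ (∑ u ∈ S, ∑ v ∈ Sᶜ, w u v) / min (∑ v ∈ S, d v) (∑ v ∈ Sᶜ, d v)) :
    φ * ∑ v ∈ S, d v ≤ ∑ u ∈ S, ∑ v ∈ Sᶜ, w u v := by
  rcases (sum_nonneg fun v _ => hd_nonneg v : 0 ≤ ∑ v ∈ S, d v).eq_or_lt with hvol | hvol
  · rw [← hvol, mul_zero]
    exact sum_nonneg fun u _ => sum_nonneg fun v _ => hw_nonneg u v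
  have hsplit := sum_add_sum_compl S d
  have hne : S.Nonempty := nonempty_of_sum_ne_zero hvol.ne'
  have huniv : S ≠ univ := by
    rintro rfl
    linarith
  have hφS := hφ hne huniv
  rwa [min_eq_left (by linarith), le_div_iff₀ hvol] at hφS

lemma exists_weighted_median (d : V → ℝ) (hd : ∀ v, 0 ≤ d v) (x : V → ℝ) :
    ∃ m : ℝ, ∑ v with m < x v, d v ≤ (∑ v, d v) / 2 ∧ ∑ v with x v < m, d v ≤ (∑ v, d v) / 2 := by
  rcases isEmpty_or_nonempty V with hV | hV
  · exact ⟨0, by simp⟩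
  have hvol : 0 ≤ ∑ v, d v := sum_nonneg fun v _ => hd v
  set P : V → Prop := fun u => (∑ v, d v) / 2 ≤ ∑ v with x v ≤ x u, d v
  obtain ⟨top, -, htop⟩ := exists_max_image univ x univ_nonempty
  have hP_top : P top := by
    simp only [P, filter_true_of_mem fun v _ => htop v (mem_univ v)]
    linarith
  obtain ⟨med, hmed, hmin⟩ := exists_min_image (univ.filter P) x ⟨top, by simpa using hP_top⟩
  refine ⟨x med, ?_, ?_⟩
  · have hsplit := sum_filter_add_sum_filter_not univ (fun v => x v ≤ x med) d
    simp only [not_le] at hsplit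
    linarith [(mem_filter.1 hmed).2]
  · by_contra! hgt
    obtain ⟨u, hu, hmax⟩ := exists_max_image (univ.filter fun v => x v < x med) x
      (nonempty_of_sum_ne_zero (f := d) (by linarith))
    have hlevel : univ.filter (fun v => x v ≤ x u) = univ.filter (fun v => x v < x med) := by
      ext v
      simp only [mem_filter, mem_univ, true_and] at hu ⊢
      exact ⟨fun hv => hv.trans_lt hu, fun hv => hmax v (by simpa using hv)⟩
    have hP_u : P u := by simp only [P, hlevel]; linarith
    exact (hmin u (by simpa using hP_u)).not_gt (by simpa using hu)

lemma sum_sum_mul_sq_posPart_sub_add_le (w : V → V → ℝ) (hw_nonneg : ∀ u v, 0 ≤ w u v)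
    (g : V → ℝ) :
    ∑ u, ∑ v, w u v * ((g u)⁺ - (g v)⁺) ^ 2 + ∑ u, ∑ v, w u v * ((g u)⁻ - (g v)⁻) ^ 2 ≤
      ∑ u, ∑ v, w u v * (g u - g v) ^ 2 := by
  simp only [← sum_add_distrib, ← mul_add]
  gcongr with u _ v _
  · exact hw_nonneg u v
  · exact sq_posPart_sub_add_sq_negPart_sub_le _ _

lemma sum_sum_compl_eq_sum_sum_mul_ite [DecidableEq V] (w : V → V → ℝ) (S : Finset V) :
    ∑ u ∈ S, ∑ v ∈ Sᶜ, w u v = ∑ u, ∑ v, w u v * (if u ∈ S ∧ v ∉ S then 1 else 0) := by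
  simp only [mul_ite, mul_one, mul_zero, ite_and, sum_ite_irrel, sum_const_zero, ← sum_filter]
  simp [compl_eq_univ_sdiff, filter_not]

theorem mul_sum_le_sum_posPart_sub_of_le_cut [DecidableEq V] (w : V → V → ℝ) (d : V → ℝ) (φ : ℝ)
    (f : V → ℝ) (hf : ∀ v, 0 ≤ f v)
    (hcut : ∀ S ⊆ univ.filter (fun v => 0 < f v), φ * ∑ v ∈ S, d v ≤ ∑ u ∈ S, ∑ v ∈ Sᶜ, w u v) :
    φ * ∑ v, d v * f v ≤ ∑ u, ∑ v, w u v * (f u - f v)⁺ := by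
  induction hn : #(univ.filter fun v => 0 < f v) using Nat.strong_induction_on generalizing f with
  | _ n ih =>
  set S := univ.filter fun v => 0 < f v
  rcases S.eq_empty_or_nonempty with hS | hS
  · have hf0 : ∀ v, f v = 0 := fun v =>
      (hf v).antisymm' (not_lt.1 (filter_eq_empty_iff.1 hS (mem_univ v)))
    simp [hf0]
  -- Peel off the lowest positive level `f c`: `f = f c • 𝟙_S + (f - f c)⁺`, and both sides of the
  -- inequality split accordingly, the `𝟙_S` part contributing `f c` times the cut of `S`.
  obtain ⟨c, hc, hmin⟩ := exists_min_image S f hS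
  have hc_pos : 0 < f c := (mem_filter.1 hc).2
  have hlevel : ∀ v, 0 < f v → f c ≤ f v := fun v hv => hmin v (by simpa [S] using hv)
  set g : V → ℝ := fun v => (f v - f c)⁺
  have hg_supp : univ.filter (fun v => 0 < g v) ⊂ S := by
    refine (ssubset_iff_of_subset fun v hv => ?_).2 ⟨c, hc, by simp [g]⟩
    simp only [mem_filter, mem_univ, true_and, g, posPart_pos_iff, sub_pos] at hv
    simpa [S] using hc_pos.trans hv
  have hg := ih _ (hn ▸ card_lt_card hg_supp) g (fun v => posPart_nonneg _)
    (fun T hT => hcut T (hT.trans hg_supp.subset)) rfl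
  have hvol : ∑ v, d v * f v = f c * ∑ v ∈ S, d v + ∑ v, d v * g v := by
    rw [sum_filter, mul_sum, ← sum_add_distrib]
    refine sum_congr rfl fun v _ => ?_
    have key := eq_mul_ite_add_posPart_sub (hf v) hc_pos.le (hlevel v)
    split_ifs at key ⊢ <;> linear_combination d v * key
  have hcutS : ∑ u, ∑ v, w u v * (f u - f v)⁺ =
      f c * ∑ u ∈ S, ∑ v ∈ Sᶜ, w u v + ∑ u, ∑ v, w u v * (g u - g v)⁺ := by
    simp only [sum_sum_compl_eq_sum_sum_mul_ite, mul_sum, ← sum_add_distrib]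
    refine sum_congr rfl fun u _ => sum_congr rfl fun v _ => ?_
    simp only [S, mem_filter, mem_univ, true_and]
    rw [posPart_sub_eq_mul_ite_add_posPart_sub (hf u) (hf v) hc_pos.le (hlevel u) (hlevel v)]
    ring
  rw [hvol, hcutS, mul_add, mul_left_comm]
  exact add_le_add (mul_le_mul_of_nonneg_left (hcut S subset_rfl) hc_pos.le) hg

lemma sq_sum_sum_mul_abs_sq_sub_sq_le (w : V → V → ℝ) (hw : ∀ u v, 0 ≤ w u v) (h : V → ℝ) :
    (∑ u, ∑ v, w u v * |h u ^ 2 - h v ^ 2|) ^ 2 ≤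
      (∑ u, ∑ v, w u v * (h u - h v) ^ 2) * ∑ u, ∑ v, w u v * (h u + h v) ^ 2 := by
  simp only [← Fintype.sum_prod_type']
  refine sum_sq_le_sum_mul_sum_of_sq_le_mul _ (fun p _ => mul_nonneg (hw _ _) (sq_nonneg _))
    (fun p _ => mul_nonneg (hw _ _) (sq_nonneg _)) fun p _ => le_of_eq ?_
  rw [mul_pow, sq_abs]
  ring

lemma sum_sum_mul_add_sq_le (w : V → V → ℝ) (hw_symm : ∀ u v, w u v = w v u)
    (hw_nonneg : ∀ u v, 0 ≤ w u v) (d : V → ℝ) (hd : ∀ v, d v = ∑ u, w v u) (h : V → ℝ) :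
    ∑ u, ∑ v, w u v * (h u + h v) ^ 2 ≤ 4 * ∑ v, d v * h v ^ 2 := by
  have hrow : ∑ u, ∑ v, w u v * h u ^ 2 = ∑ v, d v * h v ^ 2 := by
    simp only [hd, sum_mul]
  have hcol : ∑ u, ∑ v, w u v * h v ^ 2 = ∑ v, d v * h v ^ 2 := by
    rw [sum_comm]
    simp only [hd, sum_mul, hw_symm]
  calc ∑ u, ∑ v, w u v * (h u + h v) ^ 2
      ≤ ∑ u, ∑ v, (2 * (w u v * h u ^ 2) + 2 * (w u v * h v ^ 2)) := by
        gcongr with u _ v _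
        nlinarith [mul_nonneg (hw_nonneg u v) (sq_nonneg (h u - h v))]
    _ = 4 * ∑ v, d v * h v ^ 2 := by
        simp only [sum_add_distrib, ← mul_sum, hrow, hcol]
        ring

lemma sum_sum_mul_posPart_sub_eq_half (w : V → V → ℝ) (hw_symm : ∀ u v, w u v = w v u)
    (f : V → ℝ) :
    ∑ u, ∑ v, w u v * (f u - f v)⁺ = (∑ u, ∑ v, w u v * |f u - f v|) / 2 := by
  have hswap : ∑ u, ∑ v, w u v * (f u - f v)⁻ = ∑ u, ∑ v, w u v * (f u - f v)⁺ := by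
    rw [sum_comm]
    simp only [← posPart_neg, neg_sub, hw_symm]
  simp only [← posPart_add_negPart, mul_add, sum_add_distrib, hswap]
  ring

theorem sq_mul_sum_le_of_forall_le_cut [DecidableEq V] (w : V → V → ℝ)
    (hw_symm : ∀ u v, w u v = w v u) (hw_nonneg : ∀ u v, 0 ≤ w u v)
    (d : V → ℝ) (hd : ∀ v, d v = ∑ u, w v u) (φ : ℝ) (hφ : 0 ≤ φ)
    (hcut : ∀ S : Finset V, ∑ v ∈ S, d v ≤ (∑ v, d v) / 2 →
      φ * ∑ v ∈ S, d v ≤ ∑ u ∈ S, ∑ v ∈ Sᶜ, w u v)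
    (h : V → ℝ) (hh : ∀ v, 0 ≤ h v) (hsupp : ∑ v with 0 < h v, d v ≤ (∑ v, d v) / 2) :
    φ ^ 2 * ∑ v, d v * h v ^ 2 ≤ ∑ u, ∑ v, w u v * (h u - h v) ^ 2 := by
  have hd_nonneg : ∀ v, 0 ≤ d v := fun v => hd v ▸ sum_nonneg fun u _ => hw_nonneg v u
  set A := ∑ v, d v * h v ^ 2
  set L := ∑ u, ∑ v, w u v * (h u - h v) ^ 2
  set T := ∑ u, ∑ v, w u v * |h u ^ 2 - h v ^ 2|
  have hA : 0 ≤ A := sum_nonneg fun v _ => mul_nonneg (hd_nonneg v) (sq_nonneg _)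
  have hL : 0 ≤ L :=
    sum_nonneg fun u _ => sum_nonneg fun v _ => mul_nonneg (hw_nonneg u v) (sq_nonneg _)
  have hsupp_sq : univ.filter (fun v => 0 < h v ^ 2) = univ.filter (fun v => 0 < h v) :=
    filter_congr fun v _ => by rw [sq_pos_iff, (hh v).lt_iff_ne']
  have hcoarea : φ * A ≤ T / 2 := by
    rw [← sum_sum_mul_posPart_sub_eq_half w hw_symm]
    refine mul_sum_le_sum_posPart_sub_of_le_cut w d φ _ (fun v => sq_nonneg _) fun S hS => ?_
    refine hcut S (le_trans (sum_le_sum_of_subset_of_nonneg ?_ fun v _ _ => hd_nonneg v) hsupp)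
    rwa [← hsupp_sq]
  have hcs : T ^ 2 ≤ L * (4 * A) :=
    (sq_sum_sum_mul_abs_sq_sub_sq_le w hw_nonneg h).trans
      (mul_le_mul_of_nonneg_left (sum_sum_mul_add_sq_le w hw_symm hw_nonneg d hd h) hL)
  rcases hA.eq_or_lt with hA0 | hA_pos
  · rw [← hA0, mul_zero]
    exact hL
  refine le_of_mul_le_mul_right ?_ hA_pos
  nlinarith [pow_le_pow_left₀ (mul_nonneg hφ hA) hcoarea 2]

theorem sq_mul_sum_le_of_sum_mul_eq_zero [DecidableEq V] (w : V → V → ℝ)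
    (hw_symm : ∀ u v, w u v = w v u) (hw_nonneg : ∀ u v, 0 ≤ w u v)
    (d : V → ℝ) (hd : ∀ v, d v = ∑ u, w v u) (φ : ℝ) (hφ : 0 ≤ φ)
    (hcut : ∀ S : Finset V, ∑ v ∈ S, d v ≤ (∑ v, d v) / 2 →
      φ * ∑ v ∈ S, d v ≤ ∑ u ∈ S, ∑ v ∈ Sᶜ, w u v)
    (x : V → ℝ) (hx : ∑ v, d v * x v = 0) :
    φ ^ 2 * ∑ v, d v * x v ^ 2 ≤ ∑ u, ∑ v, w u v * (x u - x v) ^ 2 := by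
  have hd_nonneg : ∀ v, 0 ≤ d v := fun v => hd v ▸ sum_nonneg fun u _ => hw_nonneg v u
  obtain ⟨m, hm_gt, hm_lt⟩ := exists_weighted_median d hd_nonneg x
  have hpos := sq_mul_sum_le_of_forall_le_cut w hw_symm hw_nonneg d hd φ hφ hcut
    (fun v => (x v - m)⁺) (fun v => posPart_nonneg _) (by simpa using hm_gt)
  have hneg := sq_mul_sum_le_of_forall_le_cut w hw_symm hw_nonneg d hd φ hφ hcut
    (fun v => (x v - m)⁻) (fun v => negPart_nonneg _) (by simpa using hm_lt)
  have hsplit := sum_sum_mul_sq_posPart_sub_add_le w hw_nonneg (fun v => x v - m)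
  simp only [sub_sub_sub_cancel_right] at hsplit
  have hshift : ∑ v, d v * x v ^ 2 ≤ ∑ v, d v * (x v - m) ^ 2 := by
    have hexpand : ∑ v, d v * (x v - m) ^ 2 =
        ∑ v, d v * x v ^ 2 - 2 * m * ∑ v, d v * x v + m ^ 2 * ∑ v, d v := by
      simp only [mul_sum, ← sum_sub_distrib, ← sum_add_distrib]
      exact sum_congr rfl fun v _ => by ring
    rw [hexpand, hx]
    nlinarith [sum_nonneg (s := univ) fun v _ => hd_nonneg v, sq_nonneg m]
  calc φ ^ 2 * ∑ v, d v * x v ^ 2 ≤ φ ^ 2 * ∑ v, d v * (x v - m) ^ 2 := by gcongr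
    _ = φ ^ 2 * ∑ v, d v * ((x v - m)⁺) ^ 2 + φ ^ 2 * ∑ v, d v * ((x v - m)⁻) ^ 2 := by
        simp only [sq_eq_posPart_sq_add_negPart_sq (x _ - m), mul_add, sum_add_distrib]
    _ ≤ ∑ u, ∑ v, w u v * (x u - x v) ^ 2 := by linarith

end Graph

theorem lambda_mu_ge_phi0_sq_half_general {V : Type*} [Fintype V] [DecidableEq V]
    (w : V → V → ℝ)
    (hw_symm : ∀ u v, w u v = w v u)
    (hw_nonneg : ∀ u v, 0 ≤ w u v)
    (d : V → ℝ) (hd : ∀ v, d v = ∑ u, w v u)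
    (vol : Finset V → ℝ) (hvol : ∀ S : Finset V, vol S = ∑ v ∈ S, d v)
    (cut : Finset V → ℝ) (hcut : ∀ S : Finset V, cut S = ∑ u ∈ S, ∑ v ∈ Sᶜ, w u v)
    (phi : Finset V → ℝ) (hphi : ∀ S : Finset V, phi S = cut S / min (vol S) (vol Sᶜ))
    (QL QD : (V → ℝ) → ℝ)
    (hQL : ∀ x : V → ℝ, QL x = (1/2) * ∑ u, ∑ v, w u v * (x u - x v)^2)
    (hQD : ∀ x : V → ℝ, QD x = ∑ v, d v * x v ^ 2)
    (μ : ℝ)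
    (phi0 : ℝ)
    (hphi0 : IsLeast {y : ℝ | ∃ S : Finset V, S.Nonempty ∧ S ≠ Finset.univ ∧ y = phi S} phi0)
    (lam : ℝ)
    (hlam : IsGLB {y : ℝ | ∃ x : V → ℝ,
        (∑ v, d v * x v) = 0 ∧ QD x = 1 ∧
        (∀ v, Real.sqrt (μ / ((1 - μ) * vol Finset.univ)) ≤ |x v| ∧
              |x v| ≤ Real.sqrt ((1 - μ) / (μ * vol Finset.univ))) ∧ y = QL x} lam)
    :
    lam ≥ phi0^2 / 2 := by
  obtain rfl : vol = fun S => ∑ v ∈ S, d v := funext hvol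
  obtain rfl : cut = fun S => ∑ u ∈ S, ∑ v ∈ Sᶜ, w u v := funext hcut
  have hd_nonneg : ∀ v, 0 ≤ d v := fun v => hd v ▸ sum_nonneg fun u _ => hw_nonneg v u
  have hphi0_nonneg : 0 ≤ phi0 := by
    obtain ⟨S, -, -, rfl⟩ := hphi0.1
    rw [hphi]
    exact div_nonneg (sum_nonneg fun u _ => sum_nonneg fun v _ => hw_nonneg u v)
      (le_min (sum_nonneg fun v _ => hd_nonneg v) (sum_nonneg fun v _ => hd_nonneg v))
  have hexpansion : ∀ S : Finset V, ∑ v ∈ S, d v ≤ (∑ v, d v) / 2 →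
      phi0 * ∑ v ∈ S, d v ≤ ∑ u ∈ S, ∑ v ∈ Sᶜ, w u v := fun S hS =>
    mul_sum_le_cut_of_le_div_min w hw_nonneg d hd_nonneg phi0 S hS fun hne huniv =>
      hphi S ▸ hphi0.2 ⟨S, hne, huniv, rfl⟩
  refine hlam.2 ?_
  rintro _ ⟨x, hx_mean, hx_norm, -, rfl⟩
  have hcheeger := sq_mul_sum_le_of_sum_mul_eq_zero w hw_symm hw_nonneg d hd phi0 hphi0_nonneg
    hexpansion x hx_mean
  rw [← hQD, hx_norm] at hcheeger
  rw [hQL]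
  linarith

theorem lambda_mu_ge_phi0_sq_half {V : Type*} [Fintype V] [DecidableEq V] [Nonempty V]
    (w : V → V → ℝ)
    (hw_symm : ∀ u v, w u v = w v u)
    (hw_nonneg : ∀ u v, 0 ≤ w u v)
    (hw_loop : ∀ v, w v v = 0)
    (d : V → ℝ) (hd : ∀ v, d v = ∑ u, w v u)
    (hd_pos : ∀ v, 0 < d v)
    (vol : Finset V → ℝ) (hvol : ∀ S : Finset V, vol S = ∑ v ∈ S, d v)
    (cut : Finset V → ℝ) (hcut : ∀ S : Finset V, cut S = ∑ u ∈ S, ∑ v ∈ Sᶜ, w u v)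
    (phi : Finset V → ℝ) (hphi : ∀ S : Finset V, phi S = cut S / min (vol S) (vol Sᶜ))
    (QL QD : (V → ℝ) → ℝ)
    (hQL : ∀ x : V → ℝ, QL x = (1/2) * ∑ u, ∑ v, w u v * (x u - x v)^2)
    (hQD : ∀ x : V → ℝ, QD x = ∑ v, d v * x v ^ 2)
    (μ : ℝ) (hμ0 : 0 < μ) (hμhalf : μ ≤ 1/2)
    (phi0 : ℝ)
    (hphi0 : IsLeast {y : ℝ | ∃ S : Finset V, S.Nonempty ∧ S ≠ Finset.univ ∧ y = phi S} phi0)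
    (hexists : ∃ S : Finset V,
        μ * vol Finset.univ ≤ vol S ∧ vol S ≤ (1 - μ) * vol Finset.univ)
    (lam : ℝ)
    (hlam : IsGLB {y : ℝ | ∃ x : V → ℝ,
        (∑ v, d v * x v) = 0 ∧ QD x = 1 ∧
        (∀ v, Real.sqrt (μ / ((1 - μ) * vol Finset.univ)) ≤ |x v| ∧
              |x v| ≤ Real.sqrt ((1 - μ) / (μ * vol Finset.univ))) ∧ y = QL x} lam)
    :
    lam ≥ phi0^2 / 2 :=
  lambda_mu_ge_phi0_sq_half_general w hw_symm hw_nonneg d hd vol hvol cut hcut phi hphi QL QD hQL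
    hQD μ phi0 hphi0 lam hlam
end

section
/- Let 0 < μ ≤ 1/2 and let x : V → ℝ satisfy Σ_{v∈V} d(v)·x(v) = 0 and √(μ/((1−μ)·Vol(G))) ≤ |x(v)| ≤ √((1−μ)/(μ·Vol(G))) for every v ∈ V. Then the set P = {v ∈ V : x(v) > 0} satisfies μ·Vol(G) ≤ Vol(P) ≤ (1−μ)·Vol(G). -/
/-!
Split the vertices by the sign of `x`. Since `∑ d x = 0`, the positive and the non-positive
parts carry the same mass `∑ d |x|`; as `b ≤ |x| ≤ a` with `b = √(μ/((1-μ)Vol G))` and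
`a = √((1-μ)/(μ Vol G))`, each part's volume is at most `a / b = (1-μ)/μ` times the other's,
which pins `Vol(P)` between `μ Vol(G)` and `(1-μ) Vol(G)`.
-/

open Finset

section SignSplit

variable {ι : Type*} (s : Finset ι) (d x : ι → ℝ)

lemma sum_filter_pos_mul_abs_eq_sum_filter_not_pos_mul_abs (hsum : ∑ v ∈ s, d v * x v = 0) :
    ∑ v ∈ s with 0 < x v, d v * |x v| = ∑ v ∈ s with ¬ 0 < x v, d v * |x v| := by
  have hsplit := sum_filter_add_sum_filter_not s (fun v => 0 < x v) (fun v => d v * x v)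
  have hpos : ∑ v ∈ s with 0 < x v, d v * |x v| = ∑ v ∈ s with 0 < x v, d v * x v :=
    sum_congr rfl fun v hv => by rw [abs_of_pos (mem_filter.mp hv).2]
  have hneg : ∑ v ∈ s with ¬ 0 < x v, d v * |x v| = -∑ v ∈ s with ¬ 0 < x v, d v * x v := by
    rw [← sum_neg_distrib]
    refine sum_congr rfl fun v hv => ?_
    rw [abs_of_nonpos (not_lt.mp (mem_filter.mp hv).2), mul_neg]
  linarith

lemma sum_filter_pos_mul_le_sum_filter_not_pos_mul {a b : ℝ} (hd : ∀ v ∈ s, 0 ≤ d v)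
    (hsum : ∑ v ∈ s, d v * x v = 0) (hlow : ∀ v ∈ s, b ≤ |x v|) (hup : ∀ v ∈ s, |x v| ≤ a) :
    (∑ v ∈ s with 0 < x v, d v) * b ≤ (∑ v ∈ s with ¬ 0 < x v, d v) * a ∧
      (∑ v ∈ s with ¬ 0 < x v, d v) * b ≤ (∑ v ∈ s with 0 < x v, d v) * a := by
  have hbal := sum_filter_pos_mul_abs_eq_sum_filter_not_pos_mul_abs s d x hsum
  have lower (p : ι → Prop) [DecidablePred p] :
      (∑ v ∈ s with p v, d v) * b ≤ ∑ v ∈ s with p v, d v * |x v| := by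
    rw [sum_mul]
    refine sum_le_sum fun v hv => ?_
    have hv := (mem_filter.mp hv).1
    exact mul_le_mul_of_nonneg_left (hlow v hv) (hd v hv)
  have upper (p : ι → Prop) [DecidablePred p] :
      ∑ v ∈ s with p v, d v * |x v| ≤ (∑ v ∈ s with p v, d v) * a := by
    rw [sum_mul]
    refine sum_le_sum fun v hv => ?_
    have hv := (mem_filter.mp hv).1
    exact mul_le_mul_of_nonneg_left (hup v hv) (hd v hv)
  exact ⟨(lower _).trans (hbal ▸ upper _), (lower _).trans (hbal ▸ upper _)⟩

end SignSplit

lemma mul_sqrt_div_mul {p q : ℝ} (hq : 0 ≤ q) (c : ℝ) : q * √(p / (q * c)) = √(p * q / c) := by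
  rcases hq.eq_or_lt with rfl | hq
  · simp
  calc q * √(p / (q * c)) = √(q ^ 2) * √(p / (q * c)) := by rw [Real.sqrt_sq hq.le]
    _ = √(q ^ 2 * (p / (q * c))) := (Real.sqrt_mul (sq_nonneg q) _).symm
    _ = √(p * q / c) := by congr 1; field_simp

lemma mul_add_le_self_and_le_one_sub_mul_add {p n a b μ : ℝ} (hμ : 0 ≤ μ) (hb : 0 < b)
    (hab : μ * a = (1 - μ) * b) (hp : p * b ≤ n * a) (hn : n * b ≤ p * a) :
    μ * (p + n) ≤ p ∧ p ≤ (1 - μ) * (p + n) := by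
  have hμn : μ * n * b ≤ (1 - μ) * p * b :=
    calc μ * n * b = μ * (n * b) := by ring
      _ ≤ μ * (p * a) := mul_le_mul_of_nonneg_left hn hμ
      _ = (1 - μ) * p * b := by rw [mul_left_comm, hab]; ring
  have hμp : μ * p * b ≤ (1 - μ) * n * b :=
    calc μ * p * b = μ * (p * b) := by ring
      _ ≤ μ * (n * a) := mul_le_mul_of_nonneg_left hp hμ
      _ = (1 - μ) * n * b := by rw [mul_left_comm, hab]; ring
  have := le_of_mul_le_mul_right hμn hb
  have := le_of_mul_le_mul_right hμp hb
  constructor <;> linarith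

theorem positive_part_volume_bounds_general {V : Type*} [Fintype V] [Nonempty V]
    (d : V → ℝ)
    (hd_pos : ∀ v, 0 < d v)
    (vol : Finset V → ℝ) (hvol : ∀ S : Finset V, vol S = ∑ v ∈ S, d v)
    (μ : ℝ) (hμ0 : 0 < μ) (hμhalf : μ ≤ 1/2)
    (x : V → ℝ)
    (hx_sum : (∑ v, d v * x v) = 0)
    (hx_bounds : ∀ v, Real.sqrt (μ / ((1 - μ) * vol Finset.univ)) ≤ |x v| ∧
        |x v| ≤ Real.sqrt ((1 - μ) / (μ * vol Finset.univ))) :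
    μ * vol Finset.univ ≤ vol (Finset.univ.filter fun v => 0 < x v) ∧
    vol (Finset.univ.filter fun v => 0 < x v) ≤ (1 - μ) * vol Finset.univ := by
  have hμ1 : 0 < 1 - μ := by linarith
  have hvol_pos : 0 < vol univ := by
    rw [hvol]
    exact sum_pos (fun v _ => hd_pos v) univ_nonempty
  have hsplit : vol univ = vol {v | 0 < x v} + vol {v | ¬ 0 < x v} := by
    simp only [hvol]
    exact (sum_filter_add_sum_filter_not _ _ _).symm
  obtain ⟨hPN, hNP⟩ := sum_filter_pos_mul_le_sum_filter_not_pos_mul univ d x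
    (fun v _ => (hd_pos v).le) hx_sum (fun v _ => (hx_bounds v).1) (fun v _ => (hx_bounds v).2)
  simp only [← hvol] at hPN hNP
  have hb : 0 < √(μ / ((1 - μ) * vol univ)) :=
    Real.sqrt_pos.mpr (div_pos hμ0 (mul_pos hμ1 hvol_pos))
  have hab : μ * √((1 - μ) / (μ * vol univ)) = (1 - μ) * √(μ / ((1 - μ) * vol univ)) := by
    rw [mul_sqrt_div_mul hμ0.le, mul_sqrt_div_mul hμ1.le, mul_comm μ]
  rw [hsplit]
  exact mul_add_le_self_and_le_one_sub_mul_add hμ0.le hb hab hPN hNP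

theorem positive_part_volume_bounds {V : Type*} [Fintype V] [DecidableEq V] [Nonempty V]
    (w : V → V → ℝ)
    (hw_symm : ∀ u v, w u v = w v u)
    (hw_nonneg : ∀ u v, 0 ≤ w u v)
    (hw_loop : ∀ v, w v v = 0)
    (d : V → ℝ) (hd : ∀ v, d v = ∑ u, w v u)
    (hd_pos : ∀ v, 0 < d v)
    (vol : Finset V → ℝ) (hvol : ∀ S : Finset V, vol S = ∑ v ∈ S, d v)
    (μ : ℝ) (hμ0 : 0 < μ) (hμhalf : μ ≤ 1/2)
    (x : V → ℝ)
    (hx_sum : (∑ v, d v * x v) = 0)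
    (hx_bounds : ∀ v, Real.sqrt (μ / ((1 - μ) * vol Finset.univ)) ≤ |x v| ∧
        |x v| ≤ Real.sqrt ((1 - μ) / (μ * vol Finset.univ))) :
    μ * vol Finset.univ ≤ vol (Finset.univ.filter fun v => 0 < x v) ∧
    vol (Finset.univ.filter fun v => 0 < x v) ≤ (1 - μ) * vol Finset.univ :=
  positive_part_volume_bounds_general d hd_pos vol hvol μ hμ0 hμhalf x hx_sum hx_bounds
end

section
/- Let v_1,…,v_n be an enumeration of V and let f : V → ℝ be nonnegative with f(v_1) ≥ f(v_2) ≥ … ≥ f(v_n). With S_j = {v_1,…,v_j}, one has (1/2)·Σ_{u,v∈V} w(u,v)·|f(u)² − f(v)²| = Σ_{i=1}^{n−1} (f(v_i)² − f(v_{i+1})²)·|∂S_i|. -/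
/-!
Order the vertices by decreasing `f` and write `a_k = f(v_k)²`. By symmetry of `w`, half the
full double sum is the sum over pairs `i < j` of `w(v_i, v_j) (a_i - a_j)`. Telescoping
`a_i - a_j = Σ_{i ≤ k < j} (a_k - a_{k+1})` and exchanging the sums, the coefficient of
`a_k - a_{k+1}` is the total weight of the pairs `i ≤ k < j`, which is exactly `|∂S_{k+1}|`.
-/

open Finset

section Sweep

variable {ι : Type*} [Fintype ι]

theorem sum_sum_mul_abs_sub_eq_two_mul_sum_sum_lt {α : Type*} [LinearOrder α] (r : ι → α)
    (W : ι → ι → ℝ) (hW : ∀ x y, W x y = W y x) (h : ι → ℝ)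
    (hh : ∀ x y, r x ≤ r y → h y ≤ h x) :
    ∑ x, ∑ y, W x y * |h x - h y|
      = 2 * ∑ x, ∑ y, if r x < r y then W x y * (h x - h y) else 0 := by
  have hsplit : ∀ x y, W x y * |h x - h y|
      = (if r x < r y then W x y * (h x - h y) else 0)
        + (if r y < r x then W y x * (h y - h x) else 0) := by
    intro x y
    rcases lt_trichotomy (r x) (r y) with hxy | hxy | hxy
    · rw [if_pos hxy, if_neg hxy.not_gt, abs_of_nonneg (sub_nonneg.2 (hh x y hxy.le))]
      ring
    · have : h x = h y := le_antisymm (hh y x hxy.ge) (hh x y hxy.le)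
      simp [this]
    · rw [if_neg hxy.not_gt, if_pos hxy, abs_of_nonpos (sub_nonpos.2 (hh y x hxy.le)), hW]
      ring
  simp only [hsplit, sum_add_distrib]
  rw [sum_comm (f := fun x y => if r y < r x then W y x * (h y - h x) else 0)]
  ring

theorem ite_lt_mul_sub_eq_sum_range (g : ℕ → ℝ) (c : ℝ) {a b m : ℕ} (hbm : b ≤ m) :
    (if a < b then c * (g a - g b) else 0)
      = ∑ k ∈ range m, if a ≤ k ∧ k < b then c * (g k - g (k + 1)) else 0 := by
  have hfilter : (range m).filter (fun k => a ≤ k ∧ k < b) = Ico a b := by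
    ext k
    simp only [mem_filter, mem_range, mem_Ico]
    omega
  rw [← sum_filter, hfilter, ← mul_sum]
  split_ifs with hab
  · have htel := sum_Ico_sub (fun k => -g k) hab.le
    simp only [neg_sub_neg] at htel
    rw [htel]
  · simp [Ico_eq_empty_of_le (not_lt.1 hab)]

theorem sum_sum_ite_lt_eq_sum_range_mul (r : ι → ℕ) {m : ℕ} (hr : ∀ x, r x ≤ m)
    (W : ι → ι → ℝ) (g : ℕ → ℝ) :
    ∑ x, ∑ y, (if r x < r y then W x y * (g (r x) - g (r y)) else 0)
      = ∑ k ∈ range m, (g k - g (k + 1)) *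
          ∑ x, ∑ y, if r x ≤ k ∧ k < r y then W x y else 0 := by
  simp only [fun x y => ite_lt_mul_sub_eq_sum_range g (W x y) (a := r x) (hr y), mul_sum]
  rw [sum_comm (s := range m)]
  refine sum_congr rfl fun x _ => ?_
  rw [sum_comm]
  refine sum_congr rfl fun k _ => sum_congr rfl fun y _ => ?_
  rw [mul_ite, mul_zero, mul_comm]

variable [DecidableEq ι]

theorem sum_sum_compl_filter_eq_sum_sum_ite (p : ι → Prop) [DecidablePred p]
    (W : ι → ι → ℝ) :
    ∑ x ∈ univ.filter p, ∑ y ∈ (univ.filter p)ᶜ, W x y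
      = ∑ x, ∑ y, if p x ∧ ¬ p y then W x y else 0 := by
  rw [compl_filter, sum_filter]
  refine sum_congr rfl fun x _ => ?_
  rw [sum_filter]
  split_ifs with hx <;> simp [hx]

end Sweep

theorem sweep_cut_identity_general {V : Type*} [Fintype V] [DecidableEq V]
    (w : V → V → ℝ)
    (hw_symm : ∀ u v, w u v = w v u)
    (cut : Finset V → ℝ) (hcut : ∀ S : Finset V, cut S = ∑ u ∈ S, ∑ v ∈ Sᶜ, w u v)
    (n : ℕ) (e : Fin n ≃ V)
    (f : V → ℝ) (hf_nonneg : ∀ v, 0 ≤ f v)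
    (hf_sorted : ∀ i j : Fin n, i ≤ j → f (e j) ≤ f (e i))
    (S : ℕ → Finset V)
    (hS : ∀ j : ℕ, S j = (Finset.univ.filter fun i : Fin n => (i : ℕ) < j).image e)
    (fseq : ℕ → ℝ) (hfseq : ∀ i : Fin n, fseq (i : ℕ) = f (e i)) :
    (1/2) * ∑ u, ∑ v, w u v * |f u ^ 2 - f v ^ 2|
      = ∑ i ∈ Finset.range (n - 1), (fseq i ^ 2 - fseq (i + 1) ^ 2) * cut (S (i + 1)) := by
  set r : V → ℕ := fun v => e.symm v
  have hfr : ∀ v, f v = fseq (r v) := fun v => by simp [r, hfseq]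
  have hsq_anti : ∀ u v, r u ≤ r v → f v ^ 2 ≤ f u ^ 2 := fun u v huv => by
    have := hf_sorted (e.symm u) (e.symm v) huv
    simp only [Equiv.apply_symm_apply] at this
    exact pow_le_pow_left₀ (hf_nonneg v) this 2
  have hr_le : ∀ v, r v ≤ n - 1 := fun v => Nat.le_sub_one_of_lt (e.symm v).isLt
  have hS_filter : ∀ k, S (k + 1) = univ.filter fun v => r v ≤ k := fun k => by
    ext v
    simp only [hS, r, mem_image, mem_filter, mem_univ, true_and, Nat.lt_succ_iff]
    exact ⟨fun ⟨i, hi, hiv⟩ => hiv ▸ by simpa using hi,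
      fun hv => ⟨e.symm v, hv, e.apply_symm_apply v⟩⟩
  rw [sum_sum_mul_abs_sub_eq_two_mul_sum_sum_lt r w hw_symm _ hsq_anti]
  simp only [hfr]
  rw [sum_sum_ite_lt_eq_sum_range_mul r hr_le w (fun k => fseq k ^ 2)]
  simp only [hcut, hS_filter, sum_sum_compl_filter_eq_sum_sum_ite, not_le]
  ring

theorem sweep_cut_identity {V : Type*} [Fintype V] [DecidableEq V] [Nonempty V]
    (w : V → V → ℝ)
    (hw_symm : ∀ u v, w u v = w v u)
    (hw_nonneg : ∀ u v, 0 ≤ w u v)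
    (hw_loop : ∀ v, w v v = 0)
    (cut : Finset V → ℝ) (hcut : ∀ S : Finset V, cut S = ∑ u ∈ S, ∑ v ∈ Sᶜ, w u v)
    (n : ℕ) (hn : n = Fintype.card V) (e : Fin n ≃ V)
    (f : V → ℝ) (hf_nonneg : ∀ v, 0 ≤ f v)
    (hf_sorted : ∀ i j : Fin n, i ≤ j → f (e j) ≤ f (e i))
    (S : ℕ → Finset V)
    (hS : ∀ j : ℕ, S j = (Finset.univ.filter fun i : Fin n => (i : ℕ) < j).image e)
    (fseq : ℕ → ℝ) (hfseq : ∀ i : Fin n, fseq (i : ℕ) = f (e i)) :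
    (1/2) * ∑ u, ∑ v, w u v * |f u ^ 2 - f v ^ 2|
      = ∑ i ∈ Finset.range (n - 1), (fseq i ^ 2 - fseq (i + 1) ^ 2) * cut (S (i + 1)) :=
  sweep_cut_identity_general w hw_symm cut hcut n e f hf_nonneg hf_sorted S hS fseq hfseq
end
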